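/- arXiv:1402.0686 — 2 statements merged into one kernel-verified Lean document; each statement's English description precedes it below -/
import Mathlib

section
/- For an integrable real random variable Y and θ ∈ (0,1), the equation θ·E[(Y−y)⁺] = (1−θ)·E[(Y−y)⁻] has a unique solution y ∈ ℝ, provided Y is non-degenerate (not almost surely constant); this solution is called the θ-expectile of Y. -/
/-
The expectile equation says that `g y = θ·E[(Y−y)⁺] − (1−θ)·E[(Y−y)⁻]` vanishes.
Moving `y` up by `h` lowers `E[(Y−y)⁺]` by some `a ≥ 0` and raises `E[(Y−y)⁻]` by some `b ≥ 0`
with `a + b = h`, since `E[(Y−y)⁺] − E[(Y−y)⁻] = E[Y] − y`. Hence `g` drops by `θa + (1−θ)b`,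
which lies between `min θ (1−θ)·h` and `h`: `g` is continuous and decreases with slope bounded
away from zero, so it has exactly one zero.
-/

open MeasureTheory Filter

/-- `y` is a `θ`-expectile of the real random variable `Y`:
`θ·E[(Y−y)⁺] = (1−θ)·E[(Y−y)⁻]`. -/
def IsExpectile {Ω : Type*} [MeasureSpace Ω] (θ : ℝ) (Y : Ω → ℝ) (y : ℝ) : Prop :=
  θ * ∫ ω, max (Y ω - y) 0 = (1 - θ) * ∫ ω, max (y - Y ω) 0

theorem existsUnique_zero_of_continuous_of_mul_sub_le_sub {g : ℝ → ℝ} {m : ℝ} (hm : 0 < m)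
    (hg : Continuous g) (hslope : ∀ ⦃x y⦄, x ≤ y → m * (y - x) ≤ g x - g y) :
    ∃! z, g z = 0 := by
  have hanti : StrictAnti g := fun x y hxy => by nlinarith [hslope hxy.le]
  have hbot : Tendsto g atBot atTop :=
    tendsto_atTop_mono' _ ((eventually_le_atBot 0).mono fun y hy => by linarith [hslope hy])
      (tendsto_atTop_add_const_left _ (g 0) (tendsto_neg_atBot_atTop.const_mul_atTop hm))
  have htop : Tendsto g atTop atBot :=
    tendsto_atBot_mono' _ ((eventually_ge_atTop 0).mono fun y hy => by linarith [hslope hy])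
      (tendsto_atBot_add_const_left _ (g 0) (tendsto_neg_atTop_atBot.const_mul_atBot hm))
  obtain ⟨z, hz⟩ := hg.surjective' hbot htop 0
  exact ⟨z, hz, fun w hw => hanti.injective (hw.trans hz.symm)⟩

section Expectile

variable {Ω : Type*} [MeasurableSpace Ω] {μ : Measure Ω} {Y : Ω → ℝ}

theorem integral_max_sub_zero_sub_integral_max_sub_zero [IsProbabilityMeasure μ]
    (hY : Integrable Y μ) (y : ℝ) :
    ∫ ω, max (Y ω - y) 0 ∂μ - ∫ ω, max (y - Y ω) 0 ∂μ = ∫ ω, Y ω ∂μ - y := by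
  have hpt : ∀ ω, max (Y ω - y) 0 - max (y - Y ω) 0 = Y ω - y := fun ω => by
    simpa only [neg_sub] using max_zero_sub_max_neg_zero_eq_self (Y ω - y)
  have h₁ : Integrable (fun ω => max (Y ω - y) 0) μ := (hY.sub (integrable_const y)).pos_part
  have h₂ : Integrable (fun ω => max (y - Y ω) 0) μ := ((integrable_const y).sub hY).pos_part
  rw [← integral_sub h₁ h₂, integral_congr_ae (ae_of_all _ hpt),
    integral_sub hY (integrable_const y), integral_const, probReal_univ, one_smul]

theorem antitone_integral_max_sub_zero [IsFiniteMeasure μ] (hY : Integrable Y μ) :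
    Antitone fun y => ∫ ω, max (Y ω - y) 0 ∂μ := fun x y hxy =>
  integral_mono (hY.sub (integrable_const y)).pos_part (hY.sub (integrable_const x)).pos_part
    fun ω => max_le_max (by linarith) le_rfl

theorem monotone_integral_max_sub_zero [IsFiniteMeasure μ] (hY : Integrable Y μ) :
    Monotone fun y => ∫ ω, max (y - Y ω) 0 ∂μ := fun x y hxy =>
  integral_mono ((integrable_const x).sub hY).pos_part ((integrable_const y).sub hY).pos_part
    fun ω => max_le_max (by linarith) le_rfl

variable (μ) in
noncomputable def expectileGap (θ : ℝ) (Y : Ω → ℝ) (y : ℝ) : ℝ :=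
  θ * ∫ ω, max (Y ω - y) 0 ∂μ - (1 - θ) * ∫ ω, max (y - Y ω) 0 ∂μ

theorem expectileGap_sub_mem_Icc [IsProbabilityMeasure μ] (hY : Integrable Y μ) {θ : ℝ}
    (hθ : θ ∈ Set.Icc (0 : ℝ) 1) {x y : ℝ} (hxy : x ≤ y) :
    expectileGap μ θ Y x - expectileGap μ θ Y y ∈ Set.Icc (min θ (1 - θ) * (y - x)) (y - x) := by
  have hA := antitone_integral_max_sub_zero hY hxy
  have hB := monotone_integral_max_sub_zero hY hxy
  have hx := integral_max_sub_zero_sub_integral_max_sub_zero hY x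
  have hy := integral_max_sub_zero_sub_integral_max_sub_zero hY y
  simp only at hA hB
  unfold expectileGap
  obtain ⟨hθ0, hθ1⟩ := hθ
  constructor <;> nlinarith [min_le_left θ (1 - θ), min_le_right θ (1 - θ)]

theorem lipschitzWith_one_expectileGap [IsProbabilityMeasure μ] (hY : Integrable Y μ) {θ : ℝ}
    (hθ : θ ∈ Set.Icc (0 : ℝ) 1) : LipschitzWith 1 (expectileGap μ θ Y) := by
  refine LipschitzWith.of_le_add fun x y => ?_
  rw [Real.dist_eq]
  rcases le_total x y with hxy | hyx
  · have := (expectileGap_sub_mem_Icc hY hθ hxy).2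
    linarith [abs_sub_comm x y, le_abs_self (y - x)]
  · have := (expectileGap_sub_mem_Icc hY hθ hyx).1
    have : 0 ≤ min θ (1 - θ) * (x - y) :=
      mul_nonneg (le_min hθ.1 (sub_nonneg.2 hθ.2)) (sub_nonneg.2 hyx)
    linarith [abs_nonneg (x - y)]

end Expectile

theorem isExpectile_iff_expectileGap_eq_zero {Ω : Type*} [MeasureSpace Ω] {θ : ℝ} {Y : Ω → ℝ}
    {y : ℝ} : IsExpectile θ Y y ↔ expectileGap volume θ Y y = 0 :=
  sub_eq_zero.symm

theorem expectile_exists_unique_general {Ω : Type*} [MeasureSpace Ω]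
    [IsProbabilityMeasure (volume : Measure Ω)]
    (Y : Ω → ℝ) (hY : Integrable Y)
    (θ : ℝ) (hθ : θ ∈ Set.Ioo (0 : ℝ) 1) :
    ∃! y : ℝ, IsExpectile θ Y y := by
  have hθ' := Set.Ioo_subset_Icc_self hθ
  simpa only [isExpectile_iff_expectileGap_eq_zero] using
    existsUnique_zero_of_continuous_of_mul_sub_le_sub (lt_min hθ.1 (sub_pos.2 hθ.2))
      (lipschitzWith_one_expectileGap hY hθ').continuous
      fun _ _ hxy => (expectileGap_sub_mem_Icc hY hθ' hxy).1

/-- For an integrable, non-degenerate real random variable `Y` and `θ ∈ (0,1)`, the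
expectile equation has a unique solution. -/
theorem expectile_exists_unique {Ω : Type*} [MeasureSpace Ω]
    [IsProbabilityMeasure (volume : Measure Ω)]
    (Y : Ω → ℝ) (hY : Integrable Y) (hnd : ¬ ∃ c : ℝ, ∀ᵐ ω, Y ω = c)
    (θ : ℝ) (hθ : θ ∈ Set.Ioo (0 : ℝ) 1) :
    ∃! y : ℝ, IsExpectile θ Y y :=
  expectile_exists_unique_general Y hY θ hθ
end

section
/- If the random vector X in ℝ^d is angularly symmetric about η, i.e. (X−η)/‖X−η‖ and −(X−η)/‖X−η‖ are equal in distribution (with X ≠ η almost surely), then for every i ∈ {1,…,d} the i-th coordinate η_i is a median of the i-th component X_i, i.e. P(X_i ≤ η_i) ≥ 1/2 and P(X_i ≥ η_i) ≥ 1/2. -/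
/-!
The `i`-th coordinate of `dir (X - η)` has the sign of `X i - η i`, and angular symmetry makes it
a symmetric real random variable `Z`. For such `Z` the events `Z ≤ 0` and `0 ≤ Z` have equal
probability and together cover the sample space, so each has probability at least `1 / 2`.
-/

open MeasureTheory

/-- Euclidean-normalized direction of a vector in `ℝ^d`. -/
noncomputable def dir {d : ℕ} (v : Fin d → ℝ) : Fin d → ℝ :=
  (Real.sqrt (∑ i, (v i) ^ 2))⁻¹ • v

theorem measurable_dir {d : ℕ} : Measurable (dir : (Fin d → ℝ) → Fin d → ℝ) := by
  unfold dir; fun_prop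

lemma inv_sqrt_sum_sq_pos {d : ℕ} {v : Fin d → ℝ} {i : Fin d} (hv : v i ≠ 0) :
    0 < (Real.sqrt (∑ j, v j ^ 2))⁻¹ := by
  have : 0 < ∑ j, v j ^ 2 := lt_of_lt_of_le (by positivity)
    (Finset.single_le_sum (fun j _ => sq_nonneg (v j)) (Finset.mem_univ i))
  positivity

theorem dir_apply_nonneg_iff {d : ℕ} (v : Fin d → ℝ) (i : Fin d) : 0 ≤ dir v i ↔ 0 ≤ v i := by
  rcases eq_or_ne (v i) 0 with hv | hv
  · simp [dir, hv]
  · exact mul_nonneg_iff_of_pos_left (inv_sqrt_sum_sq_pos hv)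

theorem dir_apply_nonpos_iff {d : ℕ} (v : Fin d → ℝ) (i : Fin d) : dir v i ≤ 0 ↔ v i ≤ 0 := by
  rcases eq_or_ne (v i) 0 with hv | hv
  · simp [dir, hv]
  · show _ * v i ≤ 0 ↔ _
    rw [← neg_nonneg, ← mul_neg, mul_nonneg_iff_of_pos_left (inv_sqrt_sum_sq_pos hv), neg_nonneg]

section

variable {Ω : Type*} [MeasurableSpace Ω] {μ : Measure Ω} {Z : Ω → ℝ}

theorem measure_nonpos_eq_measure_nonneg_of_map_neg_eq (hZ : Measurable Z)
    (h : μ.map Z = μ.map (fun ω => -Z ω)) : μ {ω | Z ω ≤ 0} = μ {ω | 0 ≤ Z ω} := by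
  have hZneg : Measurable fun ω => -Z ω := hZ.neg
  have hIic := congrArg (fun ν : Measure ℝ => ν (Set.Iic 0)) h
  rw [Measure.map_apply hZ measurableSet_Iic, Measure.map_apply hZneg measurableSet_Iic] at hIic
  simpa [Set.preimage, neg_nonpos] using hIic

theorem half_le_measureReal_nonpos_and_nonneg_of_map_neg_eq [IsProbabilityMeasure μ]
    (hZ : Measurable Z) (h : μ.map Z = μ.map (fun ω => -Z ω)) :
    1 / 2 ≤ μ.real {ω | Z ω ≤ 0} ∧ 1 / 2 ≤ μ.real {ω | 0 ≤ Z ω} := by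
  have heq : μ.real {ω | Z ω ≤ 0} = μ.real {ω | 0 ≤ Z ω} := by
    simp only [measureReal_def, measure_nonpos_eq_measure_nonneg_of_map_neg_eq hZ h]
  have hcover : 1 ≤ μ.real {ω | Z ω ≤ 0} + μ.real {ω | 0 ≤ Z ω} := by
    calc 1 = μ.real ({ω | Z ω ≤ 0} ∪ {ω | 0 ≤ Z ω}) := by
          rw [← probReal_univ (μ := μ)]; congr; ext ω; simp [le_total]
      _ ≤ _ := measureReal_union_le _ _
  constructor <;> linarith

end

theorem angular_symmetry_marginal_medians_general {Ω : Type*} [MeasureSpace Ω]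
    [IsProbabilityMeasure (volume : Measure Ω)] {d : ℕ}
    (X : Ω → Fin d → ℝ) (hX : Measurable X) (η : Fin d → ℝ)
    (hsym : Measure.map (fun ω => dir (X ω - η)) volume =
            Measure.map (fun ω => -dir (X ω - η)) volume) :
    ∀ i : Fin d,
      (1 / 2 : ℝ) ≤ (volume {ω | X ω i ≤ η i}).toReal ∧
      (1 / 2 : ℝ) ≤ (volume {ω | η i ≤ X ω i}).toReal := by
  intro i
  have hY : Measurable fun ω => dir (X ω - η) := measurable_dir.comp (hX.sub measurable_const)
  have hYneg : Measurable fun ω => -dir (X ω - η) := hY.neg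
  have hZsym : volume.map (fun ω => dir (X ω - η) i) = volume.map (fun ω => -dir (X ω - η) i) := by
    have hcoord := congrArg (Measure.map (fun v : Fin d → ℝ => v i)) hsym
    rwa [Measure.map_map (measurable_pi_apply i) hY,
      Measure.map_map (measurable_pi_apply i) hYneg] at hcoord
  have hmedian :=
    half_le_measureReal_nonpos_and_nonneg_of_map_neg_eq ((measurable_pi_apply i).comp hY) hZsym
  simpa [measureReal_def, dir_apply_nonpos_iff, dir_apply_nonneg_iff, sub_nonpos, sub_nonneg]
    using hmedian

/-- If `X` is angularly symmetric about `η` (the normalized directions of `X − η`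
and `−(X − η)` are equal in distribution, with `X ≠ η` a.s.), then each coordinate
`η i` is a median of the `i`-th component of `X`. -/
theorem angular_symmetry_marginal_medians {Ω : Type*} [MeasureSpace Ω]
    [IsProbabilityMeasure (volume : Measure Ω)] {d : ℕ}
    (X : Ω → Fin d → ℝ) (hX : Measurable X) (η : Fin d → ℝ)
    (hne : ∀ᵐ ω, X ω ≠ η)
    (hsym : Measure.map (fun ω => dir (X ω - η)) volume =
            Measure.map (fun ω => -dir (X ω - η)) volume) :
    ∀ i : Fin d,
      (1 / 2 : ℝ) ≤ (volume {ω | X ω i ≤ η i}).toReal ∧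
      (1 / 2 : ℝ) ≤ (volume {ω | η i ≤ X ω i}).toReal :=
  angular_symmetry_marginal_medians_general X hX η hsym
end
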